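/- arXiv:2603.24572 — 7 statements merged into one kernel-verified Lean document; each statement's English description precedes it below -/
import Mathlib

section
/- For any finite game and any locally sound labeling (r, c): for every state s with r s = true, one has c s = M s (a state marked as resolved carries its exact minimax value). -/
open Classical in
/-- The minimax value of a state in a finite game, defined by well-founded
recursion on the child relation. -/
noncomputable def minimax {S : Type*} (A : S → Finset S)
    (hwf : WellFounded (fun x y : S => x ∈ A y)) (j : S → Bool) (f : S → ℤ) : S → ℤ :=
  WellFounded.fix hwf (fun s ih =>
    if h : A s = ∅ then f s
    else
      have hne : (A s).attach.Nonempty :=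
        Finset.attach_nonempty_iff.mpr (Finset.nonempty_iff_ne_empty.mpr h)
      if j s = true then (A s).attach.sup' hne (fun x => ih x.1 x.2)
      else (A s).attach.inf' hne (fun x => ih x.1 x.2))

/-- A labeling `(r, c)` is locally sound if every state marked as resolved
satisfies the completion backup conditions. -/
def LocallySound {S : Type*} (A : S → Finset S) (j : S → Bool) (f : S → ℤ)
    (r : S → Bool) (c : S → ℤ) : Prop :=
  ∀ s, r s = true →
    (A s = ∅ → c s = f s) ∧
    (∀ hne : (A s).Nonempty, j s = true →
      ((∃ s' ∈ A s, r s' = true ∧ c s' = 1 ∧ c s = 1) ∨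
       ((∀ s' ∈ A s, r s' = true) ∧ c s = (A s).sup' hne c))) ∧
    (∀ hne : (A s).Nonempty, j s = false →
      ((∃ s' ∈ A s, r s' = true ∧ c s' = -1 ∧ c s = -1) ∨
       ((∀ s' ∈ A s, r s' = true) ∧ c s = (A s).inf' hne c)))



lemma sup'_attach_eq {α β : Type*} [SemilatticeSup β] (s : Finset α)
    (h : s.attach.Nonempty) (h' : s.Nonempty) (f : α → β) :
    s.attach.sup' h (fun x => f x.1) = s.sup' h' f :=
  le_antisymm (Finset.sup'_le _ _ fun x _ => Finset.le_sup' f x.2)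
    (Finset.sup'_le _ _ fun x hx => Finset.le_sup' (fun y : {a // a ∈ s} => f y.1)
      (Finset.mem_attach s ⟨x, hx⟩))

lemma inf'_attach_eq {α β : Type*} [SemilatticeInf β] (s : Finset α)
    (h : s.attach.Nonempty) (h' : s.Nonempty) (f : α → β) :
    s.attach.inf' h (fun x => f x.1) = s.inf' h' f :=
  le_antisymm
    (Finset.le_inf' h' _ fun x hx => Finset.inf'_le (fun y : {a // a ∈ s} => f y.1)
      (Finset.mem_attach s ⟨x, hx⟩))
    (Finset.le_inf' h _ fun x _ => Finset.inf'_le f x.2)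

open Classical in
lemma minimax_eq {S : Type*} (A : S → Finset S)
    (hwf : WellFounded (fun x y : S => x ∈ A y)) (j : S → Bool) (f : S → ℤ) (s : S) :
    minimax A hwf j f s =
      if h : A s = ∅ then f s
      else
        have hne : (A s).Nonempty := Finset.nonempty_iff_ne_empty.mpr h
        if j s = true then (A s).sup' hne (minimax A hwf j f)
        else (A s).inf' hne (minimax A hwf j f) := by
  rw [minimax, WellFounded.fix_eq]
  by_cases h : A s = ∅
  · simp [h]
  · simp only [h, dif_neg, not_false_iff]
    have hne : (A s).Nonempty := Finset.nonempty_iff_ne_empty.mpr h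
    by_cases hj : j s = true
    · rw [if_pos hj, if_pos hj]
      exact sup'_attach_eq _ _ hne _
    · rw [if_neg hj, if_neg hj]
      exact inf'_attach_eq _ _ hne _

lemma minimax_bounds {S : Type*} (A : S → Finset S)
    (hwf : WellFounded (fun x y : S => x ∈ A y)) (j : S → Bool) (f : S → ℤ)
    (hf : ∀ s, A s = ∅ → -1 ≤ f s ∧ f s ≤ 1) :
    ∀ s, -1 ≤ minimax A hwf j f s ∧ minimax A hwf j f s ≤ 1 := by
  intro s
  induction s using hwf.induction with
  | _ s ih =>
    rw [minimax_eq]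
    by_cases h : A s = ∅
    · simpa [h] using hf s h
    · have hne : (A s).Nonempty := Finset.nonempty_iff_ne_empty.mpr h
      simp only [h, dif_neg, not_false_iff]
      by_cases hj : j s = true
      · rw [if_pos hj]
        constructor
        · obtain ⟨x, hx⟩ := hne
          exact le_trans (ih x hx).1 (Finset.le_sup' _ hx)
        · exact Finset.sup'_le _ _ fun x hx => (ih x hx).2
      · rw [if_neg hj]
        constructor
        · exact Finset.le_inf' hne _ fun x hx => (ih x hx).1
        · obtain ⟨x, hx⟩ := hne
          exact le_trans (Finset.inf'_le _ hx) (ih x hx).2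

/-- a state marked as resolved carries its exact minimax value. -/
theorem resolved_state_carries_minimax_value {S : Type*} [Fintype S]
    (A : S → Finset S) (hwf : WellFounded (fun x y : S => x ∈ A y))
    (j : S → Bool) (f : S → ℤ)
    (hf : ∀ s, A s = ∅ → -1 ≤ f s ∧ f s ≤ 1)
    (r : S → Bool) (c : S → ℤ)
    (hc : ∀ s, -1 ≤ c s ∧ c s ≤ 1)
    (hsound : LocallySound A j f r c) :
    ∀ s, r s = true → c s = minimax A hwf j f s := by

  intro s
  induction s using hwf.induction with
  | _ s ih =>
    intro hr
    rw [minimax_eq]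
    by_cases h : A s = ∅
    · simp only [h, dif_pos]
      exact (hsound s hr).1 h
    · have hne : (A s).Nonempty := Finset.nonempty_iff_ne_empty.mpr h
      simp only [h, dif_neg, not_false_iff]
      by_cases hj : j s = true
      · rw [if_pos hj]
        rcases ((hsound s hr).2.1 hne hj) with ⟨s', hs', hr', hc1, hcs⟩ | ⟨hall, hcs⟩
        · have hm : minimax A hwf j f s' = 1 := by rw [← ih s' hs' hr', hc1]
          have h1 := Finset.le_sup' (minimax A hwf j f) hs'
          rw [hm] at h1
          have h2 : (A s).sup' hne (minimax A hwf j f) ≤ 1 :=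
            Finset.sup'_le _ _ fun x hx => (minimax_bounds A hwf j f hf x).2
          rw [hcs]; omega
        · rw [hcs]
          exact Finset.sup'_congr _ rfl fun x hx => ih x hx (hall x hx)
      · have hj' : j s = false := by simpa using hj
        rw [if_neg hj]
        rcases ((hsound s hr).2.2 hne hj') with ⟨s', hs', hr', hc1, hcs⟩ | ⟨hall, hcs⟩
        · have hm : minimax A hwf j f s' = -1 := by rw [← ih s' hs' hr', hc1]
          have h1 := Finset.inf'_le (minimax A hwf j f) hs'
          rw [hm] at h1
          have h2 : (-1 : ℤ) ≤ (A s).inf' hne (minimax A hwf j f) :=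
            Finset.le_inf' _ _ fun x hx => (minimax_bounds A hwf j f hf x).1
          rw [hcs]; omega
        · rw [hcs]
          exact Finset.inf'_congr _ rfl fun x hx => ih x hx (hall x hx)
end

section
/- Backup update at a max node preserves soundness: let (r, c) be a locally sound labeling and let s be a nonterminal state with j s = true and r s = false. Define c' = Function.update c s (max_{s' ∈ A s} c s') and r' = Function.update r s b, where b = true if and only if (there exists s' ∈ A s with r s' = true and c s' = 1) or (r s' = true for all s' ∈ A s). Then (r', c') is again a locally sound labeling, and -1 ≤ c' s'' ≤ 1 for every state s''. -/
/-- backup update at a max node preserves local soundness. -/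
theorem backup_at_max_node_preserves_soundness {S : Type*} [Fintype S] [DecidableEq S]
    (A : S → Finset S) (hwf : WellFounded (fun x y : S => x ∈ A y))
    (j : S → Bool) (f : S → ℤ)
    (hf : ∀ s, A s = ∅ → -1 ≤ f s ∧ f s ≤ 1)
    (r : S → Bool) (c : S → ℤ)
    (hc : ∀ s, -1 ≤ c s ∧ c s ≤ 1)
    (hsound : LocallySound A j f r c)
    (s : S) (hne : (A s).Nonempty) (hj : j s = true) (hr : r s = false)
    (b : Bool)
    (hb : b = true ↔
      ((∃ s' ∈ A s, r s' = true ∧ c s' = 1) ∨ (∀ s' ∈ A s, r s' = true))) :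
    LocallySound A j f (Function.update r s b) (Function.update c s ((A s).sup' hne c)) ∧
    ∀ s'', -1 ≤ Function.update c s ((A s).sup' hne c) s'' ∧
      Function.update c s ((A s).sup' hne c) s'' ≤ 1 := by
  have hss : s ∉ A s := fun h => hwf.asymmetric s s h h
  constructor
  · intro t ht
    by_cases hts : t = s
    · subst hts
      rw [Function.update_self] at ht
      have hbt := hb.mp ht
      refine ⟨fun hA => absurd hA (Finset.nonempty_iff_ne_empty.mp hne), ?_, ?_⟩
      · intro hne' _
        rcases hbt with ⟨s', hs', hrs', hcs'⟩ | hall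
        · left
          have hne2 : s' ≠ t := fun h => hss (by rwa [h] at hs')
          refine ⟨s', hs', ?_, ?_, ?_⟩
          · rw [Function.update_of_ne hne2]; exact hrs'
          · rw [Function.update_of_ne hne2]; exact hcs'
          · rw [Function.update_self]
            have h1 : (1:ℤ) ≤ (A t).sup' hne c := hcs' ▸ Finset.le_sup' c hs'
            have h2 : (A t).sup' hne c ≤ 1 := Finset.sup'_le _ _ fun x _ => (hc x).2
            omega
        · right
          refine ⟨fun s' hs' => ?_, ?_⟩
          · rw [Function.update_of_ne (show s' ≠ t from fun h => hss (by rwa [h] at hs'))]; exact hall s' hs'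
          · rw [Function.update_self]
            exact (Finset.sup'_congr hne' rfl fun x hx =>
              Function.update_of_ne (show x ≠ t from fun h => hss (by rwa [h] at hx)) _ _).symm
      · intro _ hjf
        rw [hj] at hjf; exact absurd hjf (by simp)
    · rw [Function.update_of_ne hts] at ht
      obtain ⟨h1, h2, h3⟩ := hsound t ht
      refine ⟨?_, ?_, ?_⟩
      · intro hA
        rw [Function.update_of_ne hts]; exact h1 hA
      · intro hne' hjt
        rcases h2 hne' hjt with ⟨s', hs', hr', hc1, hct⟩ | ⟨hall, hct⟩
        · left
          have hne2 : s' ≠ s := fun h => by rw [h, hr] at hr'; simp at hr'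
          exact ⟨s', hs', by rw [Function.update_of_ne hne2]; exact hr',
            by rw [Function.update_of_ne hne2]; exact hc1,
            by rw [Function.update_of_ne hts]; exact hct⟩
        · right
          have hsA : s ∉ A t := fun h => by have := hall s h; rw [hr] at this; simp at this
          refine ⟨fun s' hs' => ?_, ?_⟩
          · rw [Function.update_of_ne (show s' ≠ s from fun h => hsA (by rwa [h] at hs'))]; exact hall s' hs'
          · rw [Function.update_of_ne hts, hct]
            exact (Finset.sup'_congr hne' rfl fun x hx =>
              Function.update_of_ne (show x ≠ s from fun h => hsA (by rwa [h] at hx)) _ _).symm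
      · intro hne' hjt
        rcases h3 hne' hjt with ⟨s', hs', hr', hc1, hct⟩ | ⟨hall, hct⟩
        · left
          have hne2 : s' ≠ s := fun h => by rw [h, hr] at hr'; simp at hr'
          exact ⟨s', hs', by rw [Function.update_of_ne hne2]; exact hr',
            by rw [Function.update_of_ne hne2]; exact hc1,
            by rw [Function.update_of_ne hts]; exact hct⟩
        · right
          have hsA : s ∉ A t := fun h => by have := hall s h; rw [hr] at this; simp at this
          refine ⟨fun s' hs' => ?_, ?_⟩
          · rw [Function.update_of_ne (show s' ≠ s from fun h => hsA (by rwa [h] at hs'))]; exact hall s' hs'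
          · rw [Function.update_of_ne hts, hct]
            exact (Finset.inf'_congr hne' rfl fun x hx =>
              Function.update_of_ne (show x ≠ s from fun h => hsA (by rwa [h] at hx)) _ _).symm
  · intro s''
    by_cases h : s'' = s
    · subst h; rw [Function.update_self]
      obtain ⟨x, hx⟩ := hne
      exact ⟨le_trans (hc x).1 (Finset.le_sup' c hx), Finset.sup'_le _ _ fun y _ => (hc y).2⟩
    · rw [Function.update_of_ne h]; exact hc s''
end

section
/- Backup update at a min node preserves soundness: let (r, c) be a locally sound labeling and let s be a nonterminal state with j s = false and r s = false. Define c' = Function.update c s (min_{s' ∈ A s} c s') and r' = Function.update r s b, where b = true if and only if (there exists s' ∈ A s with r s' = true and c s' = -1) or (r s' = true for all s' ∈ A s). Then (r', c') is again a locally sound labeling, and -1 ≤ c' s'' ≤ 1 for every state s''. -/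
/-- backup update at a min node preserves local soundness. -/
theorem backup_at_min_node_preserves_soundness {S : Type*} [Fintype S] [DecidableEq S]
    (A : S → Finset S) (hwf : WellFounded (fun x y : S => x ∈ A y))
    (j : S → Bool) (f : S → ℤ)
    (hf : ∀ s, A s = ∅ → -1 ≤ f s ∧ f s ≤ 1)
    (r : S → Bool) (c : S → ℤ)
    (hc : ∀ s, -1 ≤ c s ∧ c s ≤ 1)
    (hsound : LocallySound A j f r c)
    (s : S) (hne : (A s).Nonempty) (hj : j s = false) (hr : r s = false)
    (b : Bool)
    (hb : b = true ↔
      ((∃ s' ∈ A s, r s' = true ∧ c s' = -1) ∨ (∀ s' ∈ A s, r s' = true))) :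
    LocallySound A j f (Function.update r s b) (Function.update c s ((A s).inf' hne c)) ∧
    ∀ s'', -1 ≤ Function.update c s ((A s).inf' hne c) s'' ∧
      Function.update c s ((A s).inf' hne c) s'' ≤ 1 := by
  have hsA : s ∉ A s := fun h => hwf.asymmetric s s h h
  set v := (A s).inf' hne c with hv
  have hvlb : -1 ≤ v := Finset.le_inf' hne c (fun x _ => (hc x).1)
  have hvub : v ≤ 1 := by
    obtain ⟨x, hx⟩ := hne
    exact le_trans (Finset.inf'_le c hx) (hc x).2
  constructor
  · intro t htr
    by_cases hts : t = s
    · subst hts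
      have hAne : A t ≠ ∅ := Finset.nonempty_iff_ne_empty.mp hne
      refine ⟨fun h => absurd h hAne, fun _ hjt => absurd (hj ▸ hjt) (by simp), ?_⟩
      intro hne' _
      have hb' : b = true := by
        simpa [Function.update_self] using htr
      rcases hb.mp hb' with ⟨s', hs'A, hrs', hcs'⟩ | hall
      · left
        have hss' : s' ≠ t := fun h => by rw [h, hr] at hrs'; exact absurd hrs' (by simp)
        refine ⟨s', hs'A, by simp [Function.update_of_ne hss', hrs'], by simp [Function.update_of_ne hss', hcs'], ?_⟩
        simp only [Function.update_self]
        have h1 : v ≤ -1 := hcs' ▸ Finset.inf'_le c hs'A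
        omega
      · right
        constructor
        · intro s' hs'
          have hss' : s' ≠ t := fun h => hsA (by rwa [h] at hs')
          simp [Function.update_of_ne hss', hall s' hs']
        · simp only [Function.update_self, hv]
          apply Finset.inf'_congr hne' rfl
          intro x hx
          have hxt : x ≠ t := fun h => hsA (h ▸ hx)
          rw [Function.update_of_ne hxt]
    · have hrt : r t = true := by rwa [Function.update_of_ne hts] at htr
      obtain ⟨h1, h2, h3⟩ := hsound t hrt
      have hct : Function.update c s v t = c t := Function.update_of_ne hts _ _
      refine ⟨?_, ?_, ?_⟩
      · intro hAt; rw [hct]; exact h1 hAt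
      · intro hnet hjt
        rcases h2 hnet hjt with ⟨s', hs'A, hrs', hcs', hctv⟩ | ⟨hall, hctv⟩
        · have hss' : s' ≠ s := fun h => by rw [h, hr] at hrs'; exact absurd hrs' (by simp)
          exact Or.inl ⟨s', hs'A, by simp [Function.update_of_ne hss', hrs'],
            by simp [Function.update_of_ne hss', hcs'], by rw [hct]; exact hctv⟩
        · have hsnotin : s ∉ A t := fun h => by rw [hall s h] at hr; exact absurd hr (by simp)
          refine Or.inr ⟨fun s' hs' => ?_, ?_⟩
          · have hss' : s' ≠ s := fun h => hsnotin (by rwa [h] at hs')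
            simp [Function.update_of_ne hss', hall s' hs']
          · rw [hct, hctv]
            exact Finset.sup'_congr hnet rfl (fun x hx =>
              (Function.update_of_ne (fun h => hsnotin (by rwa [h] at hx)) _ _).symm)
      · intro hnet hjt
        rcases h3 hnet hjt with ⟨s', hs'A, hrs', hcs', hctv⟩ | ⟨hall, hctv⟩
        · have hss' : s' ≠ s := fun h => by rw [h, hr] at hrs'; exact absurd hrs' (by simp)
          exact Or.inl ⟨s', hs'A, by simp [Function.update_of_ne hss', hrs'],
            by simp [Function.update_of_ne hss', hcs'], by rw [hct]; exact hctv⟩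
        · have hsnotin : s ∉ A t := fun h => by rw [hall s h] at hr; exact absurd hr (by simp)
          refine Or.inr ⟨fun s' hs' => ?_, ?_⟩
          · have hss' : s' ≠ s := fun h => hsnotin (by rwa [h] at hs')
            simp [Function.update_of_ne hss', hall s' hs']
          · rw [hct, hctv]
            exact Finset.inf'_congr hnet rfl (fun x hx =>
              (Function.update_of_ne (fun h => hsnotin (by rwa [h] at hx)) _ _).symm)
  · intro s''
    by_cases h : s'' = s
    · subst h; simp only [Function.update_self]; exact ⟨hvlb, hvub⟩
    · rw [Function.update_of_ne h]; exact hc s''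
end

section
/- Resolving a terminal state preserves soundness: let (r, c) be a locally sound labeling and let s be a terminal state with r s = false. Define c' = Function.update c s (f s) and r' = Function.update r s true. Then (r', c') is again a locally sound labeling, and -1 ≤ c' s'' ≤ 1 for every state s''. -/
/-- resolving a terminal state preserves local soundness. -/
theorem resolve_terminal_preserves_soundness {S : Type*} [Fintype S] [DecidableEq S]
    (A : S → Finset S) (hwf : WellFounded (fun x y : S => x ∈ A y))
    (j : S → Bool) (f : S → ℤ)
    (hf : ∀ s, A s = ∅ → -1 ≤ f s ∧ f s ≤ 1)
    (r : S → Bool) (c : S → ℤ)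
    (hc : ∀ s, -1 ≤ c s ∧ c s ≤ 1)
    (hsound : LocallySound A j f r c)
    (s : S) (hterm : A s = ∅) (hr : r s = false) :
    LocallySound A j f (Function.update r s true) (Function.update c s (f s)) ∧
    ∀ s'', -1 ≤ Function.update c s (f s) s'' ∧ Function.update c s (f s) s'' ≤ 1 := by
  constructor
  · intro t hrt
    by_cases hts : t = s
    · subst hts
      refine ⟨fun _ => by simp, ?_, ?_⟩ <;>
        (intro hne _; exact absurd hterm (Finset.nonempty_iff_ne_empty.mp hne))
    · have hrt' : r t = true := by simpa [Function.update_of_ne hts] using hrt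
      obtain ⟨h1, h2, h3⟩ := hsound t hrt'
      have hct : Function.update c s (f s) t = c t := Function.update_of_ne hts _ _
      refine ⟨fun ht0 => by rw [hct]; exact h1 ht0, ?_, ?_⟩
      · intro hne hj
        rcases h2 hne hj with ⟨s', hs', hrs', hcs', hct'⟩ | ⟨hall, heq⟩
        · left
          have hne' : s' ≠ s := fun h => by rw [h] at hrs'; simp [hr] at hrs'
          exact ⟨s', hs', by rw [Function.update_of_ne hne']; exact hrs',
            by rw [Function.update_of_ne hne']; exact hcs', by rw [hct]; exact hct'⟩
        · right
          have hsnot : s ∉ A t := fun hmem => by exact absurd (hall s hmem) (by simp [hr])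
          refine ⟨fun s' hs' => ?_, ?_⟩
          · rw [Function.update_of_ne (by rintro rfl; exact hsnot hs')]; exact hall s' hs'
          · rw [hct]
            exact heq.trans (Finset.sup'_congr hne rfl (by
              intro s' hs'
              rw [Function.update_of_ne (by rintro rfl; exact hsnot hs')]))
      · intro hne hj
        rcases h3 hne hj with ⟨s', hs', hrs', hcs', hct'⟩ | ⟨hall, heq⟩
        · left
          have hne' : s' ≠ s := fun h => by rw [h] at hrs'; simp [hr] at hrs'
          exact ⟨s', hs', by rw [Function.update_of_ne hne']; exact hrs',
            by rw [Function.update_of_ne hne']; exact hcs', by rw [hct]; exact hct'⟩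
        · right
          have hsnot : s ∉ A t := fun hmem => by exact absurd (hall s hmem) (by simp [hr])
          refine ⟨fun s' hs' => ?_, ?_⟩
          · rw [Function.update_of_ne (by rintro rfl; exact hsnot hs')]; exact hall s' hs'
          · rw [hct]
            exact heq.trans (Finset.inf'_congr hne rfl (by
              intro s' hs'
              rw [Function.update_of_ne (by rintro rfl; exact hsnot hs')]))
  · intro s''
    by_cases h : s'' = s
    · subst h; simpa using hf s'' hterm
    · rw [Function.update_of_ne h]; exact hc s''
end

section
/- A state resolved as a win yields a winning strategy: let (r, c) be a locally sound labeling of a finite game and let s be a state with r s = true and c s = 1. Then there exists a function σ : S → S with σ s' ∈ A s' for every nonterminal s', such that every play s = s_0, s_1, …, s_k from s satisfying s_{i+1} = σ s_i whenever j s_i = true ends in a terminal state with payoff f s_k = 1 (the first player wins every such play). -/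
/-- a state resolved as a win yields a winning strategy. -/
theorem resolved_win_yields_winning_strategy {S : Type*} [Fintype S]
    (A : S → Finset S) (hwf : WellFounded (fun x y : S => x ∈ A y))
    (j : S → Bool) (f : S → ℤ)
    (hf : ∀ s, A s = ∅ → -1 ≤ f s ∧ f s ≤ 1)
    (r : S → Bool) (c : S → ℤ)
    (hc : ∀ s, -1 ≤ c s ∧ c s ≤ 1)
    (hsound : LocallySound A j f r c)
    (s : S) (hr : r s = true) (hcs : c s = 1) :
    ∃ σ : S → S, (∀ s', A s' ≠ ∅ → σ s' ∈ A s') ∧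
      ∀ (k : ℕ) (p : ℕ → S), p 0 = s →
        (∀ i < k, p (i + 1) ∈ A (p i)) → A (p k) = ∅ →
        (∀ i < k, j (p i) = true → p (i + 1) = σ (p i)) →
        f (p k) = 1 := by
  classical
  set σ : S → S := fun t =>
    if h : ∃ u ∈ A t, r u = true ∧ c u = 1 then h.choose
    else if h2 : (A t).Nonempty then h2.choose else t with hσ
  have hσmem : ∀ t, A t ≠ ∅ → σ t ∈ A t := by
    intro t ht
    rw [hσ]
    by_cases h : ∃ u ∈ A t, r u = true ∧ c u = 1
    · simp only [h, dif_pos]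
      exact h.choose_spec.1
    · have h2 : (A t).Nonempty := Finset.nonempty_iff_ne_empty.mpr ht
      simp only [h, dif_neg, not_false_iff, h2, dif_pos]
      exact h2.choose_spec
  have hσgood : ∀ t, (A t).Nonempty → r t = true → c t = 1 → j t = true →
      r (σ t) = true ∧ c (σ t) = 1 := by
    intro t hne hrt hct hjt
    have h : ∃ u ∈ A t, r u = true ∧ c u = 1 := by
      rcases (hsound t hrt).2.1 hne hjt with ⟨u, hu, hru, hcu, _⟩ | ⟨hall, heq⟩
      · exact ⟨u, hu, hru, hcu⟩
      · obtain ⟨u, hu, hux⟩ := Finset.exists_mem_eq_sup' hne c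
        refine ⟨u, hu, hall u hu, ?_⟩
        rw [← hux, ← heq, hct]
      
    rw [hσ]
    simp only [h, dif_pos]
    exact ⟨h.choose_spec.2.1, h.choose_spec.2.2⟩
  refine ⟨σ, hσmem, ?_⟩
  intro k p hp0 hstep hterm hfollow
  have key : ∀ i ≤ k, r (p i) = true ∧ c (p i) = 1 := by
    intro i hi
    induction i with
    | zero => rw [hp0]; exact ⟨hr, hcs⟩
    | succ n ih =>
      have hn : n < k := Nat.lt_of_succ_le hi
      obtain ⟨hrn, hcn⟩ := ih (Nat.le_of_lt hn)
      have hmem : p (n + 1) ∈ A (p n) := hstep n hn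
      have hne : (A (p n)).Nonempty := ⟨_, hmem⟩
      cases hj : j (p n) with
      | true =>
        have := hfollow n hn hj
        rw [this]
        exact hσgood (p n) hne hrn hcn hj
      | false =>
        rcases (hsound (p n) hrn).2.2 hne hj with ⟨u, hu, hru, hcu, hcm⟩ | ⟨hall, heq⟩
        · omega
        · refine ⟨hall _ hmem, ?_⟩
          have h1 : c (p n) ≤ c (p (n+1)) := by
            rw [heq]; exact Finset.inf'_le c hmem
          have h2 := (hc (p (n+1))).2
          omega
  obtain ⟨hrk, hck⟩ := key k le_rfl
  have := (hsound (p k) hrk).1 hterm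
  omega
end

section
/- A state resolved as a loss yields a winning strategy for the second player: let (r, c) be a locally sound labeling of a finite game and let s be a state with r s = true and c s = -1. Then there exists a function τ : S → S with τ s' ∈ A s' for every nonterminal s', such that every play s = s_0, s_1, …, s_k from s satisfying s_{i+1} = τ s_i whenever j s_i = false ends in a terminal state with payoff f s_k = -1 (the second player wins every such play). -/
/-- a state resolved as a loss yields a winning strategy
for the second player. -/
theorem resolved_loss_yields_second_player_win {S : Type*} [Fintype S]
    (A : S → Finset S) (hwf : WellFounded (fun x y : S => x ∈ A y))
    (j : S → Bool) (f : S → ℤ)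
    (hf : ∀ s, A s = ∅ → -1 ≤ f s ∧ f s ≤ 1)
    (r : S → Bool) (c : S → ℤ)
    (hc : ∀ s, -1 ≤ c s ∧ c s ≤ 1)
    (hsound : LocallySound A j f r c)
    (s : S) (hr : r s = true) (hcs : c s = -1) :
    ∃ τ : S → S, (∀ s', A s' ≠ ∅ → τ s' ∈ A s') ∧
      ∀ (k : ℕ) (p : ℕ → S), p 0 = s →
        (∀ i < k, p (i + 1) ∈ A (p i)) → A (p k) = ∅ →
        (∀ i < k, j (p i) = false → p (i + 1) = τ (p i)) →
        f (p k) = -1 := by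

  classical
  -- strategy: at a state with a resolved -1 child, move there; otherwise any child
  set τ : S → S := fun s' =>
    if h : ∃ t ∈ A s', r t = true ∧ c t = -1 then h.choose
    else if h2 : (A s').Nonempty then h2.choose else s' with hτ
  have hτmem : ∀ s', A s' ≠ ∅ → τ s' ∈ A s' := by
    intro s' hne
    rw [hτ]
    by_cases h : ∃ t ∈ A s', r t = true ∧ c t = -1
    · simp only [h, dif_pos]
      exact h.choose_spec.1
    · have h2 : (A s').Nonempty := Finset.nonempty_iff_ne_empty.mpr hne
      simp only [h, dif_neg, not_false_iff, h2, dif_pos]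
      exact h2.choose_spec
  have hτgood : ∀ s', (∃ t ∈ A s', r t = true ∧ c t = -1) →
      r (τ s') = true ∧ c (τ s') = -1 := by
    intro s' h
    rw [hτ]
    simp only [h, dif_pos]
    exact h.choose_spec.2
  -- key step lemma
  have key : ∀ t, r t = true → c t = -1 → (A t).Nonempty →
      (j t = false → ∃ t' ∈ A t, r t' = true ∧ c t' = -1) ∧
      (j t = true → ∀ t' ∈ A t, r t' = true ∧ c t' = -1) := by
    intro t hrt hct hne
    obtain ⟨-, htrue, hfalse⟩ := hsound t hrt
    constructor
    · intro hjf
      rcases hfalse hne hjf with ⟨t', ht'mem, ht'r, ht'c, -⟩ | ⟨hall, heq⟩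
      · exact ⟨t', ht'mem, ht'r, ht'c⟩
      · obtain ⟨t', ht'mem, ht'eq⟩ := Finset.exists_mem_eq_inf' hne c
        refine ⟨t', ht'mem, hall t' ht'mem, ?_⟩
        rw [← ht'eq, ← heq, hct]
    · intro hjt t' ht'mem
      rcases htrue hne hjt with ⟨u, humem, hur, huc, hcs1⟩ | ⟨hall, heq⟩
      · omega
      · refine ⟨hall t' ht'mem, ?_⟩
        have h1 : c t' ≤ (A t).sup' hne c := Finset.le_sup' c ht'mem
        have h2 := (hc t').1
        omega
  refine ⟨τ, hτmem, ?_⟩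
  intro k p hp0 hstep hterm hfollow
  have inv : ∀ i ≤ k, r (p i) = true ∧ c (p i) = -1 := by
    intro i hi
    induction i with
    | zero => rw [hp0]; exact ⟨hr, hcs⟩
    | succ n ih =>
      have hn : n ≤ k := Nat.le_of_succ_le hi
      have hnk : n < k := hi
      obtain ⟨hrn, hcn⟩ := ih hn
      have hne : (A (p n)).Nonempty :=
        ⟨p (n+1), hstep n hnk⟩
      obtain ⟨kf, kt⟩ := key (p n) hrn hcn hne
      cases hj : j (p n) with
      | false =>
        have := hfollow n hnk hj
        rw [this]
        exact hτgood (p n) (kf hj)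
      | true =>
        exact kt hj (p (n+1)) (hstep n hnk)
  obtain ⟨hrk, hck⟩ := inv k le_rfl
  obtain ⟨hT, -, -⟩ := hsound (p k) hrk
  rw [← hT hterm, hck]
end

section
/- A state resolved as a draw yields a drawing strategy for the first player: let (r, c) be a locally sound labeling of a finite game and let s be a state with r s = true and c s = 0. Then there exists a function σ : S → S with σ s' ∈ A s' for every nonterminal s', such that every play s = s_0, s_1, …, s_k from s satisfying s_{i+1} = σ s_i whenever j s_i = true ends in a terminal state with payoff f s_k ≥ 0 (the first player at least draws every such play). -/
/-- a state resolved as a draw yields a drawing strategy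
for the first player. -/
theorem resolved_draw_yields_drawing_strategy {S : Type*} [Fintype S]
    (A : S → Finset S) (hwf : WellFounded (fun x y : S => x ∈ A y))
    (j : S → Bool) (f : S → ℤ)
    (hf : ∀ s, A s = ∅ → -1 ≤ f s ∧ f s ≤ 1)
    (r : S → Bool) (c : S → ℤ)
    (hc : ∀ s, -1 ≤ c s ∧ c s ≤ 1)
    (hsound : LocallySound A j f r c)
    (s : S) (hr : r s = true) (hcs : c s = 0) :
    ∃ σ : S → S, (∀ s', A s' ≠ ∅ → σ s' ∈ A s') ∧
      ∀ (k : ℕ) (p : ℕ → S), p 0 = s →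
        (∀ i < k, p (i + 1) ∈ A (p i)) → A (p k) = ∅ →
        (∀ i < k, j (p i) = true → p (i + 1) = σ (p i)) →
        0 ≤ f (p k) := by
  classical
  set σ : S → S := fun t =>
    if h : ∃ s' ∈ A t, r s' = true ∧ 0 ≤ c s' then h.choose
    else if h2 : (A t).Nonempty then h2.choose else t with hσ
  have hσmem : ∀ t, A t ≠ ∅ → σ t ∈ A t := by
    intro t ht
    by_cases h : ∃ s' ∈ A t, r s' = true ∧ 0 ≤ c s'
    · simp only [hσ, dif_pos h]; exact h.choose_spec.1
    · have h2 : (A t).Nonempty := Finset.nonempty_iff_ne_empty.mpr ht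
      simp only [hσ, dif_neg h, dif_pos h2]; exact h2.choose_spec
  have hσgood : ∀ t, (∃ s' ∈ A t, r s' = true ∧ 0 ≤ c s') →
      r (σ t) = true ∧ 0 ≤ c (σ t) := by
    intro t h
    simp only [hσ, dif_pos h]
    exact h.choose_spec.2
  refine ⟨σ, hσmem, ?_⟩
  intro k p hp0 hstep hterm hfollow
  have key : ∀ i, i ≤ k → r (p i) = true ∧ 0 ≤ c (p i) := by
    intro i
    induction i with
    | zero => intro _; rw [hp0]; exact ⟨hr, by omega⟩
    | succ n ih =>
      intro hn
      have hnk : n < k := Nat.lt_of_succ_le hn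
      obtain ⟨hrn, hcn⟩ := ih (Nat.le_of_lt hnk)
      have hmem := hstep n hnk
      have hne : (A (p n)).Nonempty := ⟨_, hmem⟩
      obtain ⟨_, hmax, hmin⟩ := hsound (p n) hrn
      cases hj : j (p n) with
      | true =>
        have hex : ∃ s' ∈ A (p n), r s' = true ∧ 0 ≤ c s' := by
          rcases hmax hne hj with ⟨s', hs', hrs', hcs', _⟩ | ⟨hall, hsup⟩
          · exact ⟨s', hs', hrs', by omega⟩
          · obtain ⟨s', hs', hval⟩ := Finset.exists_mem_eq_sup' hne c
            exact ⟨s', hs', hall s' hs', by omega⟩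
        have := hfollow n hnk hj
        rw [this]
        exact hσgood _ hex
      | false =>
        rcases hmin hne hj with ⟨s', hs', hrs', hcs', hcn'⟩ | ⟨hall, hinf⟩
        · omega
        · have h1 := hall _ hmem
          have h2 : c (p n) ≤ c (p (n+1)) := hinf ▸ Finset.inf'_le c hmem
          exact ⟨h1, by omega⟩
  obtain ⟨hrk, hck⟩ := key k le_rfl
  have := (hsound (p k) hrk).1 hterm
  omega
end
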